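/- arXiv:2309.12153 — 9 statements merged into one kernel-verified Lean document; each statement's English description precedes it below -/
import Mathlib

section
/- Let p be an odd prime, let d be a positive divisor of p−1, set γ = (p−1)/d, and fix ε ∈ {−1, 1}. Let (a₂, a₁, v) and (b₂, b₁, w) be admissible tuples (i.e. integers with 0 ≤ a₁, a₂, b₁, b₂ ≤ p−1, β(v) ≤ a₁ + p·a₂ and β(w) ≤ b₁ + p·b₂). Then κ(a₂, a₁, v) = κ(b₂, b₁, w) (equality of triples in ℤ³) if and only if v + d·(a₁ + p·a₂) = w + d·(b₁ + p·b₂) and v − d·α(v) = w − d·α(w). -/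
/-!
The key term of `(a₂, a₁, v)` is the pair of base-`p` digits of `a₁ + p·a₂ − β(v)` (the `if`
is subtraction with borrow), followed by `v − d·α(v)`. Multiplying `β(v) = γ(v − ε) − p·α(v)`
by `d` and using `dγ = p − 1` gives
`d·(N − β(v)) = (v + d·N) − p·(v − d·α(v)) + (p − 1)·ε` for `N = a₁ + p·a₂`,
so once the third components agree, `d ≠ 0` makes equality of `N − β(v)` equivalent to
equality of `v + d·N`.
-/

lemma ite_sub_borrow_eq_ediv_emod {p a₂ a₁ b z : ℤ} (ha₁ : 0 ≤ a₁) (ha₁p : a₁ < p)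
    (hb : 0 ≤ b) (hbp : b < p) :
    (if b ≤ a₁ then (a₂, a₁ - b, z) else (a₂ - 1, a₁ - b + p, z)) =
      ((a₁ + p * a₂ - b) / p, (a₁ + p * a₂ - b) % p, z) := by
  have hp : 0 < p := by omega
  have of_digits : ∀ q r, r + p * q = a₁ + p * a₂ - b → 0 ≤ r → r < p →
      (q, r, z) = ((a₁ + p * a₂ - b) / p, (a₁ + p * a₂ - b) % p, z) := fun q r h hr₀ hr₁ => by
    obtain ⟨hq, hr⟩ := (Int.ediv_emod_unique hp).2 ⟨h, hr₀, hr₁⟩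
    rw [hq, hr]
  split_ifs
  · exact of_digits _ _ (by ring) (by omega) (by omega)
  · exact of_digits _ _ (by ring) (by omega) (by omega)

lemma ediv_emod_mk_eq_iff {α : Type*} {p x y : ℤ} {z z' : α} :
    (x / p, x % p, z) = (y / p, y % p, z') ↔ x = y ∧ z = z' := by
  simp only [Prod.mk.injEq]
  refine ⟨fun ⟨hq, hr, hz⟩ => ⟨?_, hz⟩, fun ⟨hxy, hz⟩ => ⟨hxy ▸ rfl, hxy ▸ rfl, hz⟩⟩
  rw [← Int.emod_add_mul_ediv x p, hq, hr, Int.emod_add_mul_ediv]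

lemma fdiv_sub_mul_mem_Ico {p x : ℤ} (hp : 0 < p) :
    0 ≤ x - p * x.fdiv p ∧ x - p * x.fdiv p < p := by
  rw [Int.fdiv_eq_ediv_of_nonneg x hp.le, ← Int.emod_def]
  exact ⟨Int.emod_nonneg x hp.ne', Int.emod_lt_of_pos x hp⟩

theorem keyterm_eq_iff_polesOfF_general
    (p : ℕ)
    (d γ ε : ℤ) (hd : 0 < d) (hγ : d * γ = (p : ℤ) - 1)
    (α β : ℤ → ℤ)
    (hα : ∀ v : ℤ, α v = Int.fdiv (γ * (v - ε)) (p : ℤ))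
    (hβ : ∀ v : ℤ, β v = γ * (v - ε) - (p : ℤ) * α v)
    (κ : ℤ × ℤ × ℤ → ℤ × ℤ × ℤ)
    (hκ : ∀ a₂ a₁ v : ℤ, κ (a₂, a₁, v) =
      if β v ≤ a₁ then (a₂, a₁ - β v, v - d * α v)
      else (a₂ - 1, a₁ - β v + (p : ℤ), v - d * α v))
    (a₂ a₁ v b₂ b₁ w : ℤ)
    (ha₁ : 0 ≤ a₁ ∧ a₁ ≤ (p : ℤ) - 1)
    (hb₁ : 0 ≤ b₁ ∧ b₁ ≤ (p : ℤ) - 1) :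
    κ (a₂, a₁, v) = κ (b₂, b₁, w) ↔
      v + d * (a₁ + (p : ℤ) * a₂) = w + d * (b₁ + (p : ℤ) * b₂) ∧
      v - d * α v = w - d * α w := by
  have hp : (0 : ℤ) < p := by omega
  have hβ_mem : ∀ u, 0 ≤ β u ∧ β u < p := fun u => by
    rw [hβ, hα]
    exact fdiv_sub_mul_mem_Ico hp
  have hd_mul_sub_β : ∀ u N, d * (N - β u) = (u + d * N) - p * (u - d * α u) + (p - 1) * ε :=
    fun u N => by linear_combination (-(u - ε)) * hγ - d * hβ u
  rw [hκ, hκ, ite_sub_borrow_eq_ediv_emod ha₁.1 (by omega) (hβ_mem v).1 (hβ_mem v).2,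
    ite_sub_borrow_eq_ediv_emod hb₁.1 (by omega) (hβ_mem w).1 (hβ_mem w).2,
    ediv_emod_mk_eq_iff]
  refine and_congr_left fun ht => ?_
  rw [← mul_right_inj' hd.ne', hd_mul_sub_β, hd_mul_sub_β, ht]
  exact add_left_inj _ |>.trans sub_left_inj

/-- Key-term equality at poles of `f` (Lemma 3.9, case `P ∈ B₁`):
two admissible tuples have the same key term iff
`v + d·(a₁ + p·a₂) = w + d·(b₁ + p·b₂)` and `v − d·α(v) = w − d·α(w)`. -/
theorem keyterm_eq_iff_polesOfF
    (p : ℕ) (hp : p.Prime) (hodd : Odd p)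
    (d γ ε : ℤ) (hd : 0 < d) (hγ : d * γ = (p : ℤ) - 1)
    (hε : ε = -1 ∨ ε = 1)
    (α β : ℤ → ℤ)
    (hα : ∀ v : ℤ, α v = Int.fdiv (γ * (v - ε)) (p : ℤ))
    (hβ : ∀ v : ℤ, β v = γ * (v - ε) - (p : ℤ) * α v)
    (κ : ℤ × ℤ × ℤ → ℤ × ℤ × ℤ)
    (hκ : ∀ a₂ a₁ v : ℤ, κ (a₂, a₁, v) =
      if β v ≤ a₁ then (a₂, a₁ - β v, v - d * α v)
      else (a₂ - 1, a₁ - β v + (p : ℤ), v - d * α v))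
    (a₂ a₁ v b₂ b₁ w : ℤ)
    (ha₁ : 0 ≤ a₁ ∧ a₁ ≤ (p : ℤ) - 1) (ha₂ : 0 ≤ a₂ ∧ a₂ ≤ (p : ℤ) - 1)
    (hb₁ : 0 ≤ b₁ ∧ b₁ ≤ (p : ℤ) - 1) (hb₂ : 0 ≤ b₂ ∧ b₂ ≤ (p : ℤ) - 1)
    (hadmv : β v ≤ a₁ + (p : ℤ) * a₂) (hadmw : β w ≤ b₁ + (p : ℤ) * b₂) :
    κ (a₂, a₁, v) = κ (b₂, b₁, w) ↔
      v + d * (a₁ + (p : ℤ) * a₂) = w + d * (b₁ + (p : ℤ) * b₂) ∧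
      v - d * α v = w - d * α w :=
  keyterm_eq_iff_polesOfF_general p d γ ε hd hγ α β hα hβ κ hκ a₂ a₁ v b₂ b₁ w ha₁ hb₁
end

section
/- Let p be an odd prime and let a, b be integers with 0 ≤ a ≤ p−1 and 0 ≤ b ≤ p−1. Define c ∈ ℤ/pℤ as follows: if b ≤ a, then c = (−1)^b · C(a, b) (the binomial coefficient, reduced mod p); if b > a, then c = Σ_{i=b−a}^{p−1−a} (−1)^{b+i+1} · (C(p,i)/p) · C(a+i, b), where C(p,i)/p is an integer for 1 ≤ i ≤ p−1 and the sum is reduced mod p. If b ≤ a or b ≥ p−2, then c ≠ 0 in ℤ/pℤ. -/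
/-!
Since `(C(p, i) / p) * i = C(p - 1, i - 1)` and `C(p - 1, k) ≡ (-1)^k` by Pascal's rule, the
reduced coefficient satisfies `C(p, i) / p ≡ (-1)^(i - 1) / i` modulo `p`. For `b = p - 1` the
sum has the single term `±C(p, i) / p`; for `b = p - 2` it collapses to `±(1/i - 1/(i + 1))`,
which is `±1/(i(i + 1)) ≠ 0`. For `b ≤ a < p`, `C(a, b)` divides `a!`, which is prime to `p`.
-/

open Nat

namespace Nat.Prime

variable {p : ℕ}

theorem choose_cast_ne_zero (hp : p.Prime) {a b : ℕ} (hba : b ≤ a) (hap : a < p) :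
    (a.choose b : ZMod p) ≠ 0 := by
  rw [Ne, ZMod.natCast_eq_zero_iff]
  intro hdvd
  have hfac : p ∣ a ! := hdvd.trans
    ⟨b ! * (a - b)!, by rw [← mul_assoc, choose_mul_factorial_mul_factorial hba]⟩
  exact (hp.dvd_factorial.mp hfac).not_gt hap

theorem choose_pred_cast_eq_neg_one_pow (hp : p.Prime) {k : ℕ} (hk : k < p) :
    ((p - 1).choose k : ZMod p) = (-1) ^ k := by
  induction k with
  | zero => simp
  | succ k ih =>
    have hpascal := choose_succ_succ' (p - 1) k
    rw [Nat.sub_add_cancel hp.one_le] at hpascal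
    have hzero : (p.choose (k + 1) : ZMod p) = 0 :=
      (ZMod.natCast_eq_zero_iff _ _).mpr (hp.dvd_choose_self k.add_one_ne_zero hk)
    rw [hpascal, cast_add, ih (by omega)] at hzero
    linear_combination hzero

theorem choose_div_self_mul (hp : p.Prime) {j : ℕ} (hj : j + 1 < p) :
    p.choose (j + 1) / p * (j + 1) = (p - 1).choose j := by
  have hsucc := add_one_mul_choose_eq (p - 1) j
  rw [Nat.sub_add_cancel hp.one_le] at hsucc
  rw [Nat.div_mul_right_comm (hp.dvd_choose_self j.add_one_ne_zero hj), ← hsucc,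
    Nat.mul_div_cancel_left _ hp.pos]

theorem choose_div_self_cast_mul (hp : p.Prime) {j : ℕ} (hj : j + 1 < p) :
    ((p.choose (j + 1) / p : ℕ) : ZMod p) * (j + 1) = (-1) ^ j := by
  rw [← hp.choose_pred_cast_eq_neg_one_pow (by omega : j < p), ← hp.choose_div_self_mul hj]
  push_cast
  ring

theorem choose_div_self_cast_ne_zero (hp : p.Prime) {j : ℕ} (hj : j + 1 < p) :
    ((p.choose (j + 1) / p : ℕ) : ZMod p) ≠ 0 := by
  have := Fact.mk hp
  intro hzero
  have hunit := hp.choose_div_self_cast_mul hj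
  rw [hzero, zero_mul] at hunit
  exact neg_one_pow_ne_zero j hunit.symm

theorem choose_div_self_cast_add_succ_ne_zero (hp : p.Prime) {j : ℕ} (hj : j + 2 < p) :
    ((p.choose (j + 1) / p : ℕ) : ZMod p) + ((p.choose (j + 2) / p : ℕ) : ZMod p) ≠ 0 := by
  have := Fact.mk hp
  have h₁ := hp.choose_div_self_cast_mul (j := j) (by omega)
  have h₂ := hp.choose_div_self_cast_mul (j := j + 1) hj
  push_cast at h₂
  have hprod : (((p.choose (j + 1) / p : ℕ) : ZMod p) + ((p.choose (j + 2) / p : ℕ) : ZMod p)) *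
      ((j + 1) * (j + 2)) = (-1) ^ j := by
    linear_combination (j + 2 : ZMod p) * h₁ + (j + 1 : ZMod p) * h₂
  exact left_ne_zero_of_mul (hprod ▸ neg_one_pow_ne_zero j)

end Nat.Prime

theorem keyterm_coeff_ne_zero_general
    (p : ℕ) (hp : p.Prime)
    (a b : ℕ) (ha : a ≤ p - 1) (hb : b ≤ p - 1)
    (c : ZMod p)
    (hc : c = if b ≤ a then (-1) ^ b * (a.choose b : ZMod p)
      else ∑ i ∈ Finset.Icc (b - a) (p - 1 - a),
        (-1) ^ (b + i + 1) * ((p.choose i / p : ℕ) : ZMod p) *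
          ((a + i).choose b : ZMod p))
    (h : b ≤ a ∨ p - 2 ≤ b) :
    c ≠ 0 := by
  have := Fact.mk hp
  have := hp.two_le
  subst hc
  split_ifs with hba
  · exact mul_ne_zero (neg_one_pow_ne_zero b) (hp.choose_cast_ne_zero hba (by omega))
  obtain ⟨j, rfl⟩ : ∃ j, b = a + (j + 1) := ⟨b - a - 1, by omega⟩
  obtain hlast | hpen : a + (j + 1) = p - 1 ∨ a + (j + 1) = p - 2 := by omega
  · rw [show p - 1 - a = j + 1 by omega, add_tsub_cancel_left, Finset.Icc_self,
      Finset.sum_singleton, choose_self, cast_one, mul_one]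
    exact mul_ne_zero (neg_one_pow_ne_zero _) (hp.choose_div_self_cast_ne_zero (by omega))
  · have hIcc : Finset.Icc (a + (j + 1) - a) (p - 1 - a) = {j + 1, j + 2} := by
      ext; simp only [Finset.mem_Icc, Finset.mem_insert, Finset.mem_singleton]; omega
    have hsub : ((p - 1).choose (a + (j + 1)) : ZMod p) = -1 := by
      rw [choose_symm_of_eq_add (show p - 1 = a + (j + 1) + 1 by omega),
        hp.choose_pred_cast_eq_neg_one_pow hp.one_lt, pow_one]
    rw [hIcc, Finset.sum_pair (by omega), choose_self, show a + (j + 2) = p - 1 by omega, hsub]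
    convert mul_ne_zero (neg_one_pow_ne_zero (a + (j + 1) + j + 2))
      (hp.choose_div_self_cast_add_succ_ne_zero (j := j) (by omega)) using 1
    ring

/-- Non-vanishing of key-term coefficients (arithmetic core of Lemma 3.5):
if `b ≤ a` or `b ≥ p − 2`, then the coefficient `c` is non-zero in `ℤ/pℤ`. -/
theorem keyterm_coeff_ne_zero
    (p : ℕ) (hp : p.Prime) (hodd : Odd p)
    (a b : ℕ) (ha : a ≤ p - 1) (hb : b ≤ p - 1)
    (c : ZMod p)
    (hc : c = if b ≤ a then (-1) ^ b * (a.choose b : ZMod p)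
      else ∑ i ∈ Finset.Icc (b - a) (p - 1 - a),
        (-1) ^ (b + i + 1) * ((p.choose i / p : ℕ) : ZMod p) *
          ((a + i).choose b : ZMod p))
    (h : b ≤ a ∨ p - 2 ≤ b) :
    c ≠ 0 :=
  keyterm_coeff_ne_zero_general p hp a b ha hb c hc h
end

section
/- Let p be an odd prime and write p = 2q+1. Then the sum over integers i from q+1 to p−1 of ⌊ i·(p²−p+1)/p ⌋ − ⌊ i·(p²−p+1)/p − (1 − 1/p)·(q+1)·(p²−p+1)/p ⌋, where the floors are floors of rational numbers, equals p·(p−1)²/4; equivalently, 4 times the sum equals p·(p−1)². -/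
/-!
Write `c = p² - p + 1`. Since `c = p(p - 1) + 1`, the number `i c / p` has integer part
`i(p - 1)` and fractional part `i / p` for `0 ≤ i < p`. When `p = 2q + 1` we have
`(p - 1)(q + 1) = q(p + 1)`, so the subtracted shift is `q(p³ + 1) / p² = pq + q / p²`.
For `1 ≤ i` the fractional part `i / p` is at least `q / p²`, so removing `q / p²` does not
cross an integer and every summand is exactly `pq`. There are `q` summands, and
`4 p q² = p (p - 1)²`.
-/

namespace Int

variable {K : Type*} [Field K] [LinearOrder K] [IsStrictOrderedRing K] [FloorRing K]

theorem floor_sub_eq_floor {x δ : K} (hδ : 0 ≤ δ) (hδx : δ ≤ fract x) : ⌊x - δ⌋ = ⌊x⌋ := by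
  rw [floor_eq_iff]
  constructor
  · linarith [self_sub_floor x]
  · linarith [lt_floor_add_one x]

theorem floor_sub_floor_sub_intCast_add {x δ : K} (n : ℤ) (hδ : 0 ≤ δ) (hδx : δ ≤ fract x) :
    ⌊x⌋ - ⌊x - (n + δ)⌋ = n := by
  rw [sub_add_eq_sub_sub_swap, floor_sub_intCast, floor_sub_eq_floor hδ hδx]
  ring

end Int

section BooherCais

variable {K : Type*} [Field K] [LinearOrder K] [IsStrictOrderedRing K]

theorem fract_mul_sq_sub_add_one_div [FloorRing K] {p i : ℕ} (hip : i < p) :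
    Int.fract ((i : K) * ((p : K) ^ 2 - p + 1) / p) = (i : K) / p := by
  have hp : (0 : K) < p := by exact_mod_cast (i.zero_le.trans_lt hip)
  have hsplit : (i : K) * ((p : K) ^ 2 - p + 1) / p = ((i * (p - 1) : ℤ) : K) + i / p := by
    field_simp
    push_cast
    ring
  rw [hsplit, Int.fract_intCast_add, Int.fract_eq_self]
  exact ⟨by positivity, (div_lt_one hp).mpr (by exact_mod_cast hip)⟩

theorem shift_eq_of_eq_two_mul_add_one {p q : ℕ} (hpq : p = 2 * q + 1) :
    (1 - 1 / (p : K)) * (((q : K) + 1) * ((p : K) ^ 2 - p + 1)) / p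
      = ((p * q : ℤ) : K) + q / p ^ 2 := by
  have hpq' : (p : K) = 2 * q + 1 := by exact_mod_cast hpq
  have hp : (p : K) ≠ 0 := by rw [hpq']; positivity
  field_simp
  push_cast
  rw [hpq']
  ring

theorem floor_sub_floor_sub_shift [FloorRing K] {p q i : ℕ} (hpq : p = 2 * q + 1)
    (hi : 0 < i) (hip : i < p) :
    ⌊(i : K) * ((p : K) ^ 2 - p + 1) / p⌋
      - ⌊(i : K) * ((p : K) ^ 2 - p + 1) / p
          - (1 - 1 / (p : K)) * (((q : K) + 1) * ((p : K) ^ 2 - p + 1)) / p⌋ = p * q := by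
  have hp : (0 : K) < p := by exact_mod_cast (hi.trans hip)
  have hq : (q : K) ≤ i * p := by
    have : q ≤ i * p := by nlinarith
    exact_mod_cast this
  rw [shift_eq_of_eq_two_mul_add_one hpq]
  refine Int.floor_sub_floor_sub_intCast_add _ (by positivity) ?_
  rw [fract_mul_sq_sub_add_one_div hip, div_le_div_iff₀ (by positivity) hp]
  nlinarith

end BooherCais

theorem lower_bound_sum_general
    (p q : ℕ) (hpq : p = 2 * q + 1) :
    4 * (∑ i ∈ Finset.Icc (q + 1) (p - 1),
      (⌊(i : ℚ) * ((p : ℚ) ^ 2 - p + 1) / p⌋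
        - ⌊(i : ℚ) * ((p : ℚ) ^ 2 - p + 1) / p
            - (1 - 1 / (p : ℚ)) * (((q : ℚ) + 1) * ((p : ℚ) ^ 2 - p + 1)) / p⌋)) =
    (p : ℤ) * ((p : ℤ) - 1) ^ 2 := by
  have hterm : ∀ i ∈ Finset.Icc (q + 1) (p - 1),
      ⌊(i : ℚ) * ((p : ℚ) ^ 2 - p + 1) / p⌋
        - ⌊(i : ℚ) * ((p : ℚ) ^ 2 - p + 1) / p
            - (1 - 1 / (p : ℚ)) * (((q : ℚ) + 1) * ((p : ℚ) ^ 2 - p + 1)) / p⌋ = p * q := by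
    intro i hi
    rw [Finset.mem_Icc] at hi
    exact floor_sub_floor_sub_shift hpq (by omega) (by omega)
  have hcard : (Finset.Icc (q + 1) (p - 1)).card = q := by
    rw [Nat.card_Icc]
    omega
  rw [Finset.sum_congr rfl hterm, Finset.sum_const, hcard, hpq]
  push_cast
  ring

/-- Proposition 2.17: the Booher–Cais lower bound sum equals `p(p−1)²/4`;
equivalently, 4 times the sum equals `p(p−1)²`. -/
theorem lower_bound_sum
    (p q : ℕ) (hp : p.Prime) (hpq : p = 2 * q + 1) :
    4 * (∑ i ∈ Finset.Icc (q + 1) (p - 1),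
      (⌊(i : ℚ) * ((p : ℚ) ^ 2 - p + 1) / p⌋
        - ⌊(i : ℚ) * ((p : ℚ) ^ 2 - p + 1) / p
            - (1 - 1 / (p : ℚ)) * (((q : ℚ) + 1) * ((p : ℚ) ^ 2 - p + 1)) / p⌋)) =
    (p : ℤ) * ((p : ℤ) - 1) ^ 2 :=
  lower_bound_sum_general p q hpq
end

section
/- Let p be an odd prime and write p = 2q+1. For every integer i with q+1 ≤ i ≤ p−1, ⌊ i·(p²−p+1)/p ⌋ − ⌊ i·(p²−p+1)/p − (1 − 1/p)·(q+1)·(p²−p+1)/p ⌋ = q·(2q+1), where the floors are floors of rational numbers. -/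
/-- Each summand in the Booher–Cais lower bound (proof of Proposition 2.17)
equals `q·(2q+1)`. -/
theorem lower_bound_summand
    (p q : ℕ) (hp : p.Prime) (hpq : p = 2 * q + 1)
    (i : ℕ) (hi1 : q + 1 ≤ i) (hi2 : i ≤ p - 1) :
    ⌊(i : ℚ) * ((p : ℚ) ^ 2 - p + 1) / p⌋
      - ⌊(i : ℚ) * ((p : ℚ) ^ 2 - p + 1) / p
          - (1 - 1 / (p : ℚ)) * (((q : ℚ) + 1) * ((p : ℚ) ^ 2 - p + 1)) / p⌋
      = (q : ℤ) * (2 * q + 1) := by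
  have hq1 : 1 ≤ q := by
    have := hp.two_le; omega
  have hi2' : i ≤ 2 * q := by omega
  have hpQ : (p:ℚ) = 2 * q + 1 := by exact_mod_cast congrArg (Nat.cast : ℕ → ℚ) hpq
  have hqQ : (1:ℚ) ≤ q := by exact_mod_cast hq1
  have hiL : (q:ℚ) + 1 ≤ i := by exact_mod_cast hi1
  have hiU : (i:ℚ) ≤ 2 * q := by exact_mod_cast hi2'
  have hp0 : (0:ℚ) < p := by rw [hpQ]; linarith
  have hp0' : (p:ℚ) ≠ 0 := ne_of_gt hp0
  have hpsq : (0:ℚ) < (p:ℚ)^2 := by positivity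
  -- first floor
  have h1 : ⌊(i : ℚ) * ((p : ℚ) ^ 2 - p + 1) / p⌋ = (i:ℤ) * (2 * q) := by
    rw [Int.floor_eq_iff]
    constructor
    · rw [le_div_iff₀ hp0]
      push_cast
      rw [hpQ]; nlinarith
    · rw [div_lt_iff₀ hp0]
      push_cast
      rw [hpQ]; nlinarith
  -- second floor
  have key : (i : ℚ) * ((p : ℚ) ^ 2 - p + 1) / p
          - (1 - 1 / (p : ℚ)) * (((q : ℚ) + 1) * ((p : ℚ) ^ 2 - p + 1)) / p
      = ((p : ℚ)^2 - p + 1) * (((i:ℚ) - q - 1) * p + q + 1) / p^2 := by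
    field_simp
    ring
  have h2 : ⌊(i : ℚ) * ((p : ℚ) ^ 2 - p + 1) / p
          - (1 - 1 / (p : ℚ)) * (((q : ℚ) + 1) * ((p : ℚ) ^ 2 - p + 1)) / p⌋
      = 2 * q * ((i:ℤ) - q - 1) + q := by
    rw [key, Int.floor_eq_iff]
    constructor
    · rw [le_div_iff₀ hpsq]
      push_cast
      rw [hpQ]; nlinarith
    · rw [div_lt_iff₀ hpsq]
      push_cast
      rw [hpQ]; nlinarith
  rw [h1, h2]; ring
end

section
/- Let p be an odd prime, let d be a positive divisor of p−1, set γ = (p−1)/d, and fix ε ∈ {−1, 1}. For admissible tuples t = (a₂, a₁, v) and t' = (b₂, b₁, w), define t' ≺ t if and only if either w + d·(b₁ + p·b₂) < v + d·(a₁ + p·a₂), or both w + d·(b₁ + p·b₂) = v + d·(a₁ + p·a₂) and w − d·α(w) > v − d·α(v). Then t and t' are incomparable (i.e. neither t' ≺ t nor t ≺ t') if and only if κ(t) = κ(t'). -/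
private lemma key_unique (P x y r s : ℤ) (hP : 0 < P) (hr : 0 ≤ r) (hr' : r < P)
    (hs : 0 ≤ s) (hs' : s < P) (h : P * x + r = P * y + s) : x = y ∧ r = s := by
  have hx : x = y := by
    rcases lt_trichotomy x y with h' | h' | h'
    · have h2 : (1 : ℤ) ≤ y - x := by linarith
      have h3 := mul_le_mul_of_nonneg_left h2 hP.le
      have h4 : P * (y - x) = r - s := by linear_combination -h
      linarith
    · exact h'
    · have h2 : (1 : ℤ) ≤ x - y := by linarith
      have h3 := mul_le_mul_of_nonneg_left h2 hP.le
      have h4 : P * (x - y) = s - r := by linear_combination h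
      linarith
  exact ⟨hx, by subst hx; linarith⟩

/-- Remark 3.12, case of two differentials at the same branch point of the
subcover: two admissible tuples are incomparable for the order `≺`
iff they have the same key term. -/
theorem incomparable_iff_same_keyterm_polesOfF
    (p : ℕ) (hp : p.Prime) (hodd : Odd p)
    (d γ ε : ℤ) (hd : 0 < d) (hγ : d * γ = (p : ℤ) - 1)
    (hε : ε = -1 ∨ ε = 1)
    (α β : ℤ → ℤ)
    (hα : ∀ v : ℤ, α v = Int.fdiv (γ * (v - ε)) (p : ℤ))
    (hβ : ∀ v : ℤ, β v = γ * (v - ε) - (p : ℤ) * α v)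
    (κ : ℤ × ℤ × ℤ → ℤ × ℤ × ℤ)
    (hκ : ∀ a₂ a₁ v : ℤ, κ (a₂, a₁, v) =
      if β v ≤ a₁ then (a₂, a₁ - β v, v - d * α v)
      else (a₂ - 1, a₁ - β v + (p : ℤ), v - d * α v))
    (prec : ℤ × ℤ × ℤ → ℤ × ℤ × ℤ → Prop)
    (hprec : ∀ b₂ b₁ w a₂ a₁ v : ℤ, prec (b₂, b₁, w) (a₂, a₁, v) ↔
      (w + d * (b₁ + (p : ℤ) * b₂) < v + d * (a₁ + (p : ℤ) * a₂) ∨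
       (w + d * (b₁ + (p : ℤ) * b₂) = v + d * (a₁ + (p : ℤ) * a₂) ∧
        v - d * α v < w - d * α w)))
    (a₂ a₁ v b₂ b₁ w : ℤ)
    (ha₁ : 0 ≤ a₁ ∧ a₁ ≤ (p : ℤ) - 1) (ha₂ : 0 ≤ a₂ ∧ a₂ ≤ (p : ℤ) - 1)
    (hb₁ : 0 ≤ b₁ ∧ b₁ ≤ (p : ℤ) - 1) (hb₂ : 0 ≤ b₂ ∧ b₂ ≤ (p : ℤ) - 1)
    (hadmv : β v ≤ a₁ + (p : ℤ) * a₂) (hadmw : β w ≤ b₁ + (p : ℤ) * b₂) :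
    (¬ prec (b₂, b₁, w) (a₂, a₁, v) ∧ ¬ prec (a₂, a₁, v) (b₂, b₁, w)) ↔
      κ (a₂, a₁, v) = κ (b₂, b₁, w) := by
  have hp0 : (0 : ℤ) < (p : ℤ) := by exact_mod_cast hp.pos
  -- bounds on β
  have hβbd : ∀ u : ℤ, 0 ≤ β u ∧ β u < (p : ℤ) := by
    intro u
    have h1 : β u = (γ * (u - ε)) % (p : ℤ) := by
      rw [hβ, hα, Int.fdiv_eq_ediv_of_nonneg _ hp0.le, Int.emod_def]
    rw [h1]
    exact ⟨Int.emod_nonneg _ hp0.ne', Int.emod_lt_of_pos _ hp0⟩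
  obtain ⟨hβv0, hβvp⟩ := hβbd v
  obtain ⟨hβw0, hβwp⟩ := hβbd w
  -- key identities
  have keyv : v + d * (a₁ + (p : ℤ) * a₂) =
      (p : ℤ) * (v - d * α v) + d * (a₁ + (p : ℤ) * a₂ - β v) - ((p : ℤ) - 1) * ε := by
    rw [hβ]; linear_combination (v - ε) * hγ
  have keyw : w + d * (b₁ + (p : ℤ) * b₂) =
      (p : ℤ) * (w - d * α w) + d * (b₁ + (p : ℤ) * b₂ - β w) - ((p : ℤ) - 1) * ε := by
    rw [hβ]; linear_combination (w - ε) * hγ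
  -- Step 1: incomparability iff S and T agree
  have main1 : (¬ prec (b₂, b₁, w) (a₂, a₁, v) ∧ ¬ prec (a₂, a₁, v) (b₂, b₁, w)) ↔
      (v + d * (a₁ + (p : ℤ) * a₂) = w + d * (b₁ + (p : ℤ) * b₂) ∧
       v - d * α v = w - d * α w) := by
    rw [hprec, hprec]
    constructor
    · rintro ⟨h1, h2⟩
      push_neg at h1 h2
      have hS : v + d * (a₁ + (p : ℤ) * a₂) = w + d * (b₁ + (p : ℤ) * b₂) :=
        le_antisymm h1.1 h2.1
      exact ⟨hS, le_antisymm (h2.2 hS) (h1.2 hS.symm)⟩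
    · rintro ⟨hS, hT⟩
      constructor
      · rintro (h | ⟨-, h⟩) <;> linarith
      · rintro (h | ⟨-, h⟩) <;> linarith
  -- Step 2: bridge between (S,T) equality and (N,T) equality
  have main2 : (v + d * (a₁ + (p : ℤ) * a₂) = w + d * (b₁ + (p : ℤ) * b₂) ∧
       v - d * α v = w - d * α w) ↔
      (a₁ + (p : ℤ) * a₂ - β v = b₁ + (p : ℤ) * b₂ - β w ∧
       v - d * α v = w - d * α w) := by
    constructor
    · rintro ⟨hS, hT⟩
      refine ⟨?_, hT⟩
      rw [hT] at keyv
      have hdN : d * (a₁ + (p : ℤ) * a₂ - β v) = d * (b₁ + (p : ℤ) * b₂ - β w) := by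
        linarith
      exact mul_left_cancel₀ hd.ne' hdN
    · rintro ⟨hN, hT⟩
      rw [hT] at keyv
      rw [hN] at keyv
      exact ⟨by linarith, hT⟩
  -- Step 3: (N,T) equality iff same key term
  rw [main1, main2, hκ, hκ]
  rcases le_or_gt (β v) a₁ with h1 | h1 <;> rcases le_or_gt (β w) b₁ with h2 | h2
  · rw [if_pos h1, if_pos h2]
    simp only [Prod.mk.injEq]
    constructor
    · rintro ⟨hN, hT⟩
      obtain ⟨hx, hr⟩ := key_unique (p : ℤ) a₂ b₂ (a₁ - β v) (b₁ - β w) hp0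
        (by linarith) (by linarith [ha₁.2]) (by linarith) (by linarith [hb₁.2])
        (by linear_combination hN)
      exact ⟨hx, hr, hT⟩
    · rintro ⟨hx, hr, hT⟩
      exact ⟨by linear_combination hr + (p : ℤ) * hx, hT⟩
  · rw [if_pos h1, if_neg (not_le.mpr h2)]
    simp only [Prod.mk.injEq]
    constructor
    · rintro ⟨hN, hT⟩
      obtain ⟨hx, hr⟩ := key_unique (p : ℤ) a₂ (b₂ - 1) (a₁ - β v) (b₁ - β w + (p : ℤ)) hp0
        (by linarith) (by linarith [ha₁.2]) (by linarith) (by linarith)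
        (by linear_combination hN)
      exact ⟨by linarith, hr, hT⟩
    · rintro ⟨hx, hr, hT⟩
      exact ⟨by linear_combination hr + (p : ℤ) * hx, hT⟩
  · rw [if_neg (not_le.mpr h1), if_pos h2]
    simp only [Prod.mk.injEq]
    constructor
    · rintro ⟨hN, hT⟩
      obtain ⟨hx, hr⟩ := key_unique (p : ℤ) (a₂ - 1) b₂ (a₁ - β v + (p : ℤ)) (b₁ - β w) hp0
        (by linarith) (by linarith) (by linarith) (by linarith [hb₁.2])
        (by linear_combination hN)
      exact ⟨by linarith, hr, hT⟩
    · rintro ⟨hx, hr, hT⟩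
      exact ⟨by linear_combination hr + (p : ℤ) * hx, hT⟩
  · rw [if_neg (not_le.mpr h1), if_neg (not_le.mpr h2)]
    simp only [Prod.mk.injEq]
    constructor
    · rintro ⟨hN, hT⟩
      obtain ⟨hx, hr⟩ := key_unique (p : ℤ) (a₂ - 1) (b₂ - 1) (a₁ - β v + (p : ℤ))
        (b₁ - β w + (p : ℤ)) hp0
        (by linarith) (by linarith) (by linarith) (by linarith)
        (by linear_combination hN)
      exact ⟨by linarith, hr, hT⟩
    · rintro ⟨hx, hr, hT⟩
      exact ⟨by linear_combination hr + (p : ℤ) * hx, hT⟩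
end

section
/- Let p be an odd prime, let d be a positive divisor of p−1, set γ = (p−1)/d, and take ε = 1. Let (a₂, a₁, v) be an admissible tuple which additionally satisfies 0 < p²·v and p²·v ≤ p·d·(p−1−a₁) + d·(p²−p+1)·(p−1−a₂) + p² − 1. Write (b₂, b₁, w) = κ(a₂, a₁, v). Then 0 ≤ b₁ ≤ p−1, 0 ≤ b₂ ≤ p−1, 0 < p²·w, and p²·w ≤ p·d·(p−1−b₁) + d·(p²−p+1)·(p−1−b₂) + p² − 1. -/
/-- Definition 3.2: `κ` maps `H_P` into `W_P` for a branch point `P ≠ ∞`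
of the subcover (the `ε = 1` case). -/
theorem keyterm_mem_WP
    (p : ℕ) (hp : p.Prime) (hodd : Odd p)
    (d γ : ℤ) (hd : 0 < d) (hγ : d * γ = (p : ℤ) - 1)
    (α β : ℤ → ℤ)
    (hα : ∀ v : ℤ, α v = Int.fdiv (γ * (v - 1)) (p : ℤ))
    (hβ : ∀ v : ℤ, β v = γ * (v - 1) - (p : ℤ) * α v)
    (κ : ℤ × ℤ × ℤ → ℤ × ℤ × ℤ)
    (hκ : ∀ a₂ a₁ v : ℤ, κ (a₂, a₁, v) =
      if β v ≤ a₁ then (a₂, a₁ - β v, v - d * α v)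
      else (a₂ - 1, a₁ - β v + (p : ℤ), v - d * α v))
    (a₂ a₁ v b₂ b₁ w : ℤ)
    (ha₁ : 0 ≤ a₁ ∧ a₁ ≤ (p : ℤ) - 1) (ha₂ : 0 ≤ a₂ ∧ a₂ ≤ (p : ℤ) - 1)
    (hadm : β v ≤ a₁ + (p : ℤ) * a₂)
    (hv0 : 0 < (p : ℤ) ^ 2 * v)
    (hvW : (p : ℤ) ^ 2 * v ≤ (p : ℤ) * d * ((p : ℤ) - 1 - a₁)
      + d * ((p : ℤ) ^ 2 - (p : ℤ) + 1) * ((p : ℤ) - 1 - a₂) + (p : ℤ) ^ 2 - 1)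
    (hkey : (b₂, b₁, w) = κ (a₂, a₁, v)) :
    0 ≤ b₁ ∧ b₁ ≤ (p : ℤ) - 1 ∧ 0 ≤ b₂ ∧ b₂ ≤ (p : ℤ) - 1 ∧
    0 < (p : ℤ) ^ 2 * w ∧
    (p : ℤ) ^ 2 * w ≤ (p : ℤ) * d * ((p : ℤ) - 1 - b₁)
      + d * ((p : ℤ) ^ 2 - (p : ℤ) + 1) * ((p : ℤ) - 1 - b₂) + (p : ℤ) ^ 2 - 1 := by
  obtain ⟨ha₁0, ha₁p⟩ := ha₁
  obtain ⟨ha₂0, ha₂p⟩ := ha₂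
  have hp2 : 2 ≤ p := hp.two_le
  have hpne2 : p ≠ 2 := by rintro rfl; exact (Nat.not_odd_iff_even.mpr (by decide)) hodd
  have hp3 : (3 : ℤ) ≤ (p : ℤ) := by exact_mod_cast (by omega : 3 ≤ p)
  have hp0 : (0 : ℤ) < (p : ℤ) := by linarith
  -- β v is the (nonnegative) remainder of γ(v-1) by p
  have hβv : β v = (γ * (v - 1)) % (p : ℤ) := by
    rw [hβ, hα, Int.fdiv_eq_ediv_of_nonneg _ (le_of_lt hp0), Int.emod_def]
  have hB0 : 0 ≤ β v := by
    rw [hβv]; exact Int.emod_nonneg _ (by positivity)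
  have hBp : β v ≤ (p : ℤ) - 1 := by
    have := Int.emod_lt_of_pos (γ * (v - 1)) hp0
    rw [hβv]; omega
  -- the key algebraic identity for α
  have hpA : (p : ℤ) * (d * α v) = ((p : ℤ) - 1) * (v - 1) - d * β v := by
    have h := hβ v
    linear_combination d * h + (v - 1) * hγ
  have hv1 : 1 ≤ v := by
    by_contra h
    push_neg at h
    have h0 : (0 : ℤ) ≤ -v := by omega
    nlinarith [mul_nonneg (sq_nonneg ((p : ℤ))) h0]
  -- identity for p² w
  have hw2 : (p : ℤ) ^ 2 * (v - d * α v)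
      = (p : ℤ) * v + (p : ℤ) * ((p : ℤ) - 1) + (p : ℤ) * (d * β v) := by
    linear_combination (-(p : ℤ)) * hpA
  have hpv : (0 : ℤ) < (p : ℤ) * v := mul_pos hp0 (by linarith)
  have hpp : (0 : ℤ) ≤ (p : ℤ) * ((p : ℤ) - 1) := mul_nonneg hp0.le (by linarith)
  have hpdb : (0 : ℤ) ≤ (p : ℤ) * (d * β v) := mul_nonneg hp0.le (mul_nonneg hd.le hB0)
  rw [hκ] at hkey
  by_cases hc : β v ≤ a₁
  · rw [if_pos hc] at hkey
    obtain ⟨h2, h1, hw⟩ : b₂ = a₂ ∧ b₁ = a₁ - β v ∧ w = v - d * α v := by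
      simpa [Prod.ext_iff] using hkey
    subst h2 h1 hw
    have hprod : (0 : ℤ) ≤ ((p : ℤ) ^ 2 - (p : ℤ)) * (v - 1) :=
      mul_nonneg (by nlinarith) (by linarith)
    refine ⟨by linarith, by linarith, ha₂0, ha₂p, ?_, ?_⟩
    · rw [hw2]; linarith
    · rw [hw2]; linarith [hvW, hprod]
  · rw [if_neg hc] at hkey
    push_neg at hc
    obtain ⟨h2, h1, hw⟩ : b₂ = a₂ - 1 ∧ b₁ = a₁ - β v + (p : ℤ) ∧ w = v - d * α v := by
      simpa [Prod.ext_iff] using hkey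
    subst h2 h1 hw
    have hpa₂ : (0 : ℤ) < (p : ℤ) * a₂ := by linarith
    have ha₂1 : 1 ≤ a₂ := by
      rcases le_or_gt 1 a₂ with h | h
      · exact h
      · exfalso
        have h0 : a₂ ≤ 0 := by omega
        nlinarith [mul_nonneg hp0.le (by linarith : (0 : ℤ) ≤ -a₂)]
    have ha₁p2 : a₁ ≤ (p : ℤ) - 2 := by omega
    have hpp1 : (0 : ℤ) ≤ (p : ℤ) ^ 2 - (p : ℤ) + 1 := by nlinarith [hpp]
    have hM : (0 : ℤ) ≤ ((p : ℤ) - 1) * (d * ((p : ℤ) ^ 2 - (p : ℤ) + 1) * ((p : ℤ) - 1 - a₂)) :=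
      mul_nonneg (by linarith)
        (mul_nonneg (mul_nonneg hd.le hpp1) (by linarith))
    have hAa : (0 : ℤ) ≤ ((p : ℤ) * d) * (((p : ℤ) - 1) * ((p : ℤ) - 2 - a₁)) :=
      mul_nonneg (mul_nonneg hp0.le hd.le)
        (mul_nonneg (by linarith) (by linarith))
    have hpG : (p : ℤ) * ((p : ℤ) * (v - 1))
        < (p : ℤ) * (d * ((p : ℤ) ^ 2 - (p : ℤ) + 1) * ((p : ℤ) - a₂)
          - (p : ℤ) * d * (a₁ + 1)) := by
      linarith [hvW, hM, hAa]
    have hG : (p : ℤ) * (v - 1)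
        < d * ((p : ℤ) ^ 2 - (p : ℤ) + 1) * ((p : ℤ) - a₂) - (p : ℤ) * d * (a₁ + 1) :=
      lt_of_mul_lt_mul_left hpG hp0.le
    refine ⟨by linarith, by linarith, by linarith, by linarith, ?_, ?_⟩
    · rw [hw2]; linarith
    · rw [hw2]; linarith [hG]
end

section
/- Let p be an odd prime, let d be a positive divisor of p−1, set γ = (p−1)/d, and take ε = −1. Let (a₂, a₁, v) be an admissible tuple which additionally satisfies 0 ≤ p²·v and p²·v ≤ p·d·(p−1−a₁) + d·(p²−p+1)·(p−1−a₂) − p² − 1. Write (b₂, b₁, w) = κ(a₂, a₁, v). Then 0 ≤ b₁ ≤ p−1, 0 ≤ b₂ ≤ p−1, 0 ≤ p²·w, and p²·w ≤ p·d·(p−1−b₁) + d·(p²−p+1)·(p−1−b₂) − p² − 1. -/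
/-- Definition 3.2: `κ` maps `H_∞` into `W_∞` at the branch point at infinity
(the `ε = −1` case). -/
theorem keyterm_mem_Winf
    (p : ℕ) (hp : p.Prime) (hodd : Odd p)
    (d γ : ℤ) (hd : 0 < d) (hγ : d * γ = (p : ℤ) - 1)
    (α β : ℤ → ℤ)
    (hα : ∀ v : ℤ, α v = Int.fdiv (γ * (v + 1)) (p : ℤ))
    (hβ : ∀ v : ℤ, β v = γ * (v + 1) - (p : ℤ) * α v)
    (κ : ℤ × ℤ × ℤ → ℤ × ℤ × ℤ)
    (hκ : ∀ a₂ a₁ v : ℤ, κ (a₂, a₁, v) =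
      if β v ≤ a₁ then (a₂, a₁ - β v, v - d * α v)
      else (a₂ - 1, a₁ - β v + (p : ℤ), v - d * α v))
    (a₂ a₁ v b₂ b₁ w : ℤ)
    (ha₁ : 0 ≤ a₁ ∧ a₁ ≤ (p : ℤ) - 1) (ha₂ : 0 ≤ a₂ ∧ a₂ ≤ (p : ℤ) - 1)
    (hadm : β v ≤ a₁ + (p : ℤ) * a₂)
    (hv0 : 0 ≤ (p : ℤ) ^ 2 * v)
    (hvW : (p : ℤ) ^ 2 * v ≤ (p : ℤ) * d * ((p : ℤ) - 1 - a₁)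
      + d * ((p : ℤ) ^ 2 - (p : ℤ) + 1) * ((p : ℤ) - 1 - a₂) - (p : ℤ) ^ 2 - 1)
    (hkey : (b₂, b₁, w) = κ (a₂, a₁, v)) :
    0 ≤ b₁ ∧ b₁ ≤ (p : ℤ) - 1 ∧ 0 ≤ b₂ ∧ b₂ ≤ (p : ℤ) - 1 ∧
    0 ≤ (p : ℤ) ^ 2 * w ∧
    (p : ℤ) ^ 2 * w ≤ (p : ℤ) * d * ((p : ℤ) - 1 - b₁)
      + d * ((p : ℤ) ^ 2 - (p : ℤ) + 1) * ((p : ℤ) - 1 - b₂) - (p : ℤ) ^ 2 - 1 := by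
  have hp2 : (2:ℤ) ≤ (p:ℤ) := by exact_mod_cast hp.two_le
  have hppos : (0:ℤ) < (p:ℤ) := by linarith
  have hγ1 : 1 ≤ γ := by
    by_contra h
    push_neg at h
    have : d * γ ≤ 0 := mul_nonpos_of_nonneg_of_nonpos (le_of_lt hd) (by omega)
    omega
  have hdle : d ≤ (p:ℤ) - 1 := by nlinarith
  have hv : 0 ≤ v := by nlinarith
  set A := α v with hA
  set B := β v with hB
  have hBdef : B = γ * (v + 1) - (p:ℤ) * A := hβ v
  have hBfmod : B = Int.fmod (γ * (v + 1)) (p:ℤ) := by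
    rw [Int.fmod_def, hBdef, hA, hα]
  have hB0 : 0 ≤ B := by
    rw [hBfmod]; exact Int.fmod_nonneg (by nlinarith) (le_of_lt hppos)
  have hBp : B < (p:ℤ) := by rw [hBfmod]; exact Int.fmod_lt_of_pos _ hppos
  -- key: p * (d * A) = (p-1)*(v+1) - d*B
  have hkeyA : (p:ℤ) * (d * A) = ((p:ℤ) - 1) * (v + 1) - d * B := by
    have : d * B = d * (γ * (v+1)) - d * ((p:ℤ) * A) := by rw [hBdef]; ring
    nlinarith [this]
  have hdAv : d * A ≤ v := by
    have h1 : (p:ℤ) * (d * A) ≤ ((p:ℤ) - 1) * (v + 1) := by nlinarith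
    nlinarith
  have hp2A : (p:ℤ)^2 * (d * A) = (p:ℤ) * (((p:ℤ) - 1) * (v + 1) - d * B) := by
    rw [pow_two, mul_assoc, hkeyA]
  have hlow : 0 ≤ (p:ℤ)^2 * (v - d * A) :=
    mul_nonneg (by positivity) (by linarith)
  have haux1 : 0 ≤ (p:ℤ) * (((p:ℤ) - 1) * (v + 1)) :=
    mul_nonneg (le_of_lt hppos) (mul_nonneg (by linarith) (by linarith))
  have haux2 : 0 ≤ ((p:ℤ) - 1) * ((p:ℤ) * (v + 1) - d) := by
    apply mul_nonneg (by linarith)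
    nlinarith
  rw [hκ] at hkey
  by_cases hc : B ≤ a₁
  · rw [if_pos hc] at hkey
    simp only [Prod.mk.injEq] at hkey
    obtain ⟨e2, e1, ew⟩ := hkey
    subst e2 e1 ew
    refine ⟨by linarith, by linarith, ha₂.1, ha₂.2, hlow, ?_⟩
    have hW1 : (p:ℤ)^2 * (v - d * A)
        = (p:ℤ)^2 * v - (p:ℤ) * (((p:ℤ) - 1) * (v + 1)) + (p:ℤ) * (d * B) := by
      linear_combination (-1 : ℤ) * hp2A
    have hY : 0 ≤ (p:ℤ) * (d * B) :=
      mul_nonneg (le_of_lt hppos) (mul_nonneg (le_of_lt hd) hB0)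
    linarith [hvW, haux1, hW1, hY]
  · rw [if_neg hc] at hkey
    push_neg at hc
    simp only [Prod.mk.injEq] at hkey
    obtain ⟨e2, e1, ew⟩ := hkey
    subst e2 e1 ew
    have ha2' : 1 ≤ a₂ := by
      by_contra h
      push_neg at h
      have : (p:ℤ) * a₂ ≤ 0 :=
        mul_nonpos_of_nonneg_of_nonpos (le_of_lt hppos) (by omega)
      linarith
    refine ⟨by linarith, by linarith, by linarith, by linarith, hlow, ?_⟩
    have hW1 : (p:ℤ)^2 * (v - d * A)
        = (p:ℤ)^2 * v - (p:ℤ) * (((p:ℤ) - 1) * (v + 1)) + (p:ℤ) * (d * B) := by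
      linear_combination (-1 : ℤ) * hp2A
    linarith [hvW, haux2, hW1]
end

section
/- Let p be an odd prime, let e be a positive divisor of p−1, and set δ = (p−1)/e. Let (a₂, a₁, v) be an admissible tuple which additionally satisfies 0 < p·v and p·v ≤ e·(p−1−a₂) + p − 1. Write (b₂, b₁, w) = κ(a₂, a₁, v) = (a₂ − β(v), a₁, v − e·α(v)). Then 0 ≤ b₂ ≤ p−1, b₁ = a₁, 0 < p·w, and p·w ≤ e·(p−1−b₂) + p − 1. -/
/-- Definition 3.6: the key term of an admissible tuple in `W_P`, for a branch
point `P` outside the branch locus of the subcover, again lies in `W_P`. -/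
theorem keyterm_mem_WP_polesOfH
    (p : ℕ) (hp : p.Prime) (hodd : Odd p)
    (e δ : ℤ) (he : 0 < e) (hδ : e * δ = (p : ℤ) - 1)
    (α β : ℤ → ℤ)
    (hα : ∀ v : ℤ, α v = Int.fdiv (δ * (v - 1)) (p : ℤ))
    (hβ : ∀ v : ℤ, β v = δ * (v - 1) - (p : ℤ) * α v)
    (a₂ a₁ v b₂ b₁ w : ℤ)
    (ha₁ : 0 ≤ a₁ ∧ a₁ ≤ (p : ℤ) - 1) (ha₂ : 0 ≤ a₂ ∧ a₂ ≤ (p : ℤ) - 1)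
    (hadm : β v ≤ a₂)
    (hv0 : 0 < (p : ℤ) * v)
    (hvW : (p : ℤ) * v ≤ e * ((p : ℤ) - 1 - a₂) + (p : ℤ) - 1)
    (hkey : (b₂, b₁, w) = (a₂ - β v, a₁, v - e * α v)) :
    0 ≤ b₂ ∧ b₂ ≤ (p : ℤ) - 1 ∧ b₁ = a₁ ∧ 0 < (p : ℤ) * w ∧
    (p : ℤ) * w ≤ e * ((p : ℤ) - 1 - b₂) + (p : ℤ) - 1 := by
  obtain ⟨hb₂, hb₁, hw⟩ : b₂ = a₂ - β v ∧ b₁ = a₁ ∧ w = v - e * α v := by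
    simpa [Prod.ext_iff] using hkey
  have hp2 : (2 : ℤ) ≤ (p : ℤ) := by exact_mod_cast hp.two_le
  have hppos : (0 : ℤ) < (p : ℤ) := by linarith
  have hβv : β v = (δ * (v - 1)) % (p : ℤ) := by
    rw [hβ, hα, Int.fdiv_eq_ediv_of_nonneg _ hppos.le, Int.emod_def]
  have hB0 : 0 ≤ β v := by rw [hβv]; exact Int.emod_nonneg _ (by positivity)
  have hBp : β v < (p : ℤ) := by rw [hβv]; exact Int.emod_lt_of_pos _ hppos
  have hkeyid : e * β v = ((p : ℤ) - 1) * (v - 1) - (p : ℤ) * (e * α v) := by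
    rw [hβ]; linear_combination (v - 1) * hδ
  have hv1 : 1 ≤ v := by nlinarith
  have hpw : (p : ℤ) * w = v + (p : ℤ) - 1 + e * β v := by
    rw [hw]; nlinarith [hkeyid]
  have heB : 0 ≤ e * β v := mul_nonneg he.le hB0
  have hvm : 0 ≤ ((p : ℤ) - 1) * (v - 1) := by
    apply mul_nonneg <;> linarith
  have hE : v ≤ e * ((p : ℤ) - 1 - a₂) := by nlinarith
  refine ⟨by linarith, by linarith, hb₁, by linarith, ?_⟩
  rw [hb₂]
  nlinarith [hpw, hE]
end

section
/- Let p be an odd prime and let R be a commutative ring of characteristic p. For every Witt vector a over R (an element of the ring of p-typical Witt vectors 𝕎(R)), setting s = F(a) − a where F is the Witt vector Frobenius, one has: (i) the 0-th coefficient of s equals (a₀)^p − a₀, and (ii) the 1-st coefficient of s equals (a₁)^p − a₁ − Σ_{i=1}^{p−1} (−1)^i · c_i · (a₀)^{p(p−i)+i}, where a₀, a₁ are the 0-th and 1-st coefficients of a and c_i denotes the image in R of the integer C(p,i)/p = (p−1)!/(i!·(p−i)!). -/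
/-!
Over `ℤ`, the first subtraction polynomial `S₁` is pinned down by the Witt polynomial identity
`p S₁ + (X₀ - Y₀)^p = p X₁ + X₀^p - p Y₁ - Y₀^p`. Expanding `(X₀ - Y₀)^p` binomially (for odd `p`
the top term is `-Y₀^p`) and dividing by `p` gives `S₁` explicitly. Evaluating `S₀` and `S₁` at
`(F a, a)`, where in characteristic `p` the Frobenius raises each coefficient to the `p`-th power,
gives both formulas.
-/

open MvPolynomial Finset

theorem Odd.sub_pow_eq_pow_sub_pow_add_sum {S : Type*} [CommRing S] {p : ℕ} (hodd : Odd p)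
    (A B : S) :
    (A - B) ^ p = A ^ p - B ^ p +
      ∑ i ∈ Icc 1 (p - 1), (-1 : S) ^ i * (p.choose i : S) * A ^ (p - i) * B ^ i := by
  have hpos : 0 < p := hodd.pos
  rw [Icc_sub_one_right_eq_Ico_of_not_isMin (by simpa using hpos.ne'), sub_eq_neg_add,
    add_pow, range_eq_Ico, sum_eq_sum_Ico_succ_bot (by omega), sum_Ico_succ_top hpos]
  simp only [pow_zero, Nat.choose_zero_right, Nat.choose_self, Nat.sub_zero, Nat.sub_self,
    Nat.cast_one, one_mul, mul_one, hodd.neg_pow, _root_.neg_pow B]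
  ring_nf

namespace WittVector

theorem natCast_mul_wittSub_one (p : ℕ) [Fact p.Prime] :
    (p : MvPolynomial (Fin 2 × ℕ) ℤ) * wittSub p 1 =
      (p : MvPolynomial (Fin 2 × ℕ) ℤ) * (X (0, 1) - X (1, 1)) +
        (X (0, 0) ^ p - X (1, 0) ^ p - (X (0, 0) - X (1, 0)) ^ p) := by
  have h := wittStructureInt_prop p (X 0 - X 1 : MvPolynomial (Fin 2) ℤ) 1
  simp only [wittPolynomial_one, map_add, map_mul, map_sub, map_pow, bind₁_X_right,
    rename_X, map_natCast] at h
  rw [← wittSub, wittSub_zero] at h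
  linear_combination h

theorem wittSub_one_of_odd (p : ℕ) [hp : Fact p.Prime] (hodd : Odd p) :
    wittSub p 1 = X (0, 1) - X (1, 1) - ∑ i ∈ Icc 1 (p - 1),
      (-1) ^ i * ((p.choose i / p : ℕ) : MvPolynomial (Fin 2 × ℕ) ℤ) * X (0, 0) ^ (p - i) *
        X (1, 0) ^ i := by
  refine mul_left_cancel₀ (Nat.cast_ne_zero.2 hp.out.ne_zero) ?_
  have hchoose : ∀ i ∈ Icc 1 (p - 1), (p : MvPolynomial (Fin 2 × ℕ) ℤ) *
      ((-1) ^ i * ((p.choose i / p : ℕ) : MvPolynomial (Fin 2 × ℕ) ℤ) * X (0, 0) ^ (p - i) *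
        X (1, 0) ^ i) =
        (-1) ^ i * (p.choose i : MvPolynomial (Fin 2 × ℕ) ℤ) * X (0, 0) ^ (p - i) * X (1, 0) ^ i := by
    intro i hi
    rw [mem_Icc] at hi
    have hc : (p * (p.choose i / p : ℕ) : MvPolynomial (Fin 2 × ℕ) ℤ) = p.choose i := by
      exact_mod_cast Nat.mul_div_cancel' (hp.out.dvd_choose_self (by omega) (by omega))
    linear_combination (-1) ^ i * X (0, 0) ^ (p - i) * X (1, 0) ^ i * hc
  rw [natCast_mul_wittSub_one, hodd.sub_pow_eq_pow_sub_pow_add_sum, ← sum_congr rfl hchoose,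
    ← mul_sum]
  ring

end WittVector

/-- The `n = 2` case of the Artin–Schreier–Witt unfolding (Proposition 2.2
combined with equation (3.3)): for a Witt vector `a` over a ring of
characteristic `p`, the coefficients of `F(a) − a` are as stated. -/
theorem witt_frobenius_sub_coeff
    (p : ℕ) [hp : Fact p.Prime] (hodd : Odd p)
    (R : Type*) [CommRing R] [CharP R p]
    (a s : WittVector p R)
    (hs : s = WittVector.frobenius a - a) :
    s.coeff 0 = a.coeff 0 ^ p - a.coeff 0 ∧
    s.coeff 1 = a.coeff 1 ^ p - a.coeff 1 -
      ∑ i ∈ Finset.Icc 1 (p - 1),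
        (-1 : R) ^ i * ((p.choose i / p : ℕ) : R) *
          a.coeff 0 ^ (p * (p - i) + i) := by
  subst hs
  refine ⟨?_, ?_⟩
  · simp [WittVector.sub_coeff, WittVector.peval, WittVector.coeff_frobenius_charP]
  · rw [WittVector.sub_coeff, WittVector.wittSub_one_of_odd p hodd]
    simp only [WittVector.peval, map_sub, map_sum, map_mul, map_pow, map_neg, map_one, map_natCast,
      aeval_X, Function.uncurry, Matrix.cons_val_zero, Matrix.cons_val_one,
      WittVector.coeff_frobenius_charP, pow_mul, pow_add, ← mul_assoc]
end
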